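/- The symmetrization map Φ : 𝒫 → 𝒜 from the commutative polynomial algebra in x₁,…,xₙ into the free associative algebra on X₁,…,Xₙ, defined degreewise by x^(α) ↦ Sym(X^(α)), is a vector-space isomorphism of 𝒫 onto the subspace ℛ of regular polynomials of 𝒜. -/

import Mathlib

/-!
Write `symProd y = ∑_σ y_{σ 1} ⋯ y_{σ m}`, so that `symz α` is `symProd` of the word of `α`
divided by `m!`. Abelianization sends `symz α` to the monomial `x^α`, hence is a left inverse of
`Φ`, and the range of `Φ` is the span of the `symz α`. Each `symz α` is regular by the
polarization identity `symProd y = ∑_S (-1)^|S| (∑_{j ∉ S} y j)^m`. Conversely, for a linear form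
`ℓ = ∑ cᵢ Xᵢ`, expanding `m! ℓ^m = symProd (ℓ, …, ℓ)` multilinearly writes `ℓ^m` as a combination
of `symProd` of words in the `Xᵢ`, and such a value depends only on the multiset of letters, so it
is a multiple of some `symz α`.
-/

open scoped BigOperators

noncomputable section

/-- The word `X₁^{α₁} ⋯ Xₙ^{αₙ}` as a list of generator indices. -/
def word (n : ℕ) (α : Fin n → ℕ) : List (Fin n) :=
  (List.finRange n).flatMap fun i => List.replicate (α i) i

/-- The symmetrization `symz(X^(α)) = (1/m!) ∑_{σ ∈ Σₘ} X'_{σ(1)} ⋯ X'_{σ(m)}`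
of the monomial `X^(α)` in the free associative algebra. -/
def symz (K : Type) [Field K] (n : ℕ) (α : Fin n → ℕ) : FreeAlgebra K (Fin n) :=
  ((Nat.factorial (word n α).length : K))⁻¹ •
    ∑ σ : Equiv.Perm (Fin (word n α).length),
      (List.ofFn fun j => FreeAlgebra.ι K ((word n α).get (σ j))).prod

/-- Regular homogeneous polynomials of degree `m`: the span of `m`-th powers of
linear forms in the generators. -/
def RegHom (K : Type) [Field K] (n m : ℕ) : Submodule K (FreeAlgebra K (Fin n)) :=
  Submodule.span K {x | ∃ c : Fin n → K, x = (∑ i, c i • FreeAlgebra.ι K i) ^ m}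

/-- Regular polynomials: the span of all powers of linear forms in the generators. -/
def Reg (K : Type) [Field K] (n : ℕ) : Submodule K (FreeAlgebra K (Fin n)) :=
  Submodule.span K {x | ∃ (m : ℕ) (c : Fin n → K), x = (∑ i, c i • FreeAlgebra.ι K i) ^ m}

/-- The symmetrization map `Φ` from commutative polynomials to the free algebra,
sending `x^(α)` to `symz(X^(α))` and extended linearly. -/
def Phi (K : Type) [Field K] (n : ℕ) (p : MvPolynomial (Fin n) K) : FreeAlgebra K (Fin n) :=
  ∑ d ∈ p.support, p.coeff d • symz K n (fun i => d i)

open Finset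
open scoped Nat

lemma exists_equiv_comp_eq_of_map_univ_eq {α β γ : Type*} [Fintype α] [Fintype β]
    {f : α → γ} {g : β → γ} (h : univ.val.map f = univ.val.map g) : ∃ e : α ≃ β, g ∘ e = f := by
  classical
  have hfiber (c : γ) : Fintype.card {a // f a = c} = Fintype.card {b // g b = c} := by
    have hcount := congrArg (Multiset.count c) h
    simp only [Multiset.count_map] at hcount
    simp only [Fintype.card_subtype, @eq_comm _ _ c] at hcount ⊢
    exact hcount
  exact ⟨Equiv.ofFiberEquiv fun c => Fintype.equivOfCardEq (hfiber c),
    funext (Equiv.ofFiberEquiv_map _)⟩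

lemma sum_powerset_disjoint_neg_one_pow_card {α : Type*} [Fintype α] [DecidableEq α]
    (t : Finset α) :
    ∑ S : Finset α, (if Disjoint S t then (-1 : ℤ) ^ #S else 0) = if t = univ then 1 else 0 := by
  have hfilter : univ.filter (Disjoint · t) = tᶜ.powerset := by
    ext S; simp [subset_compl_iff_disjoint_right]
  rw [← sum_filter, hfilter, sum_powerset_neg_one_pow_card]
  simp only [compl_eq_empty_iff]

lemma sum_pow_eq_sum_piFinset {A ι : Type*} [Semiring A] [DecidableEq ι] (s : Finset ι)
    (y : ι → A) (m : ℕ) :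
    (∑ j ∈ s, y j) ^ m = ∑ r ∈ Fintype.piFinset fun _ : Fin m => s, (List.ofFn (y ∘ r)).prod := by
  simpa [Function.comp_def] using
    (MultilinearMap.mkPiAlgebraFin ℕ m A).map_sum_finset (fun _ => y) (fun _ => s)

section SymmetrizedProduct

variable (R A : Type*) [CommSemiring R] [Semiring A] [Algebra R A]

def symProd (m : ℕ) : MultilinearMap R (fun _ : Fin m => A) A :=
  ∑ σ : Equiv.Perm (Fin m), (MultilinearMap.mkPiAlgebraFin R m A).domDomCongr σ

variable {R A} {m : ℕ}

lemma symProd_apply (y : Fin m → A) :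
    symProd R A m y = ∑ σ : Equiv.Perm (Fin m), (List.ofFn (y ∘ σ)).prod := by
  simp [symProd, Function.comp_def]

lemma symProd_comp_equiv {m' : ℕ} (y : Fin m → A) (e : Fin m' ≃ Fin m) :
    symProd R A m' (y ∘ e) = symProd R A m y := by
  obtain rfl : m' = m := Fin.equiv_iff_eq.mp ⟨e⟩
  simp only [symProd_apply]
  exact Fintype.sum_equiv (Equiv.mulLeft e) _ _ fun σ => rfl

lemma symProd_const (x : A) : symProd R A m (fun _ => x) = m ! • x ^ m := by
  simp [symProd_apply, Function.comp_def, Fintype.card_perm]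

lemma map_symProd {B : Type*} [CommSemiring B] [Algebra R B] (f : A →ₐ[R] B) (y : Fin m → A) :
    f (symProd R A m y) = m ! • ∏ j, f (y j) := by
  simp only [symProd_apply, map_sum, map_list_prod, List.map_ofFn, List.prod_ofFn,
    Function.comp_apply]
  rw [sum_congr rfl fun σ _ => Equiv.prod_comp σ fun j => f (y j), sum_const, card_univ,
    Fintype.card_perm, Fintype.card_fin, nsmul_eq_mul]

end SymmetrizedProduct

lemma symProd_eq_sum_neg_one_pow_smul_pow {R A : Type*} [CommSemiring R] [Ring A] [Algebra R A]
    {m : ℕ} (y : Fin m → A) :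
    symProd R A m y = ∑ S : Finset (Fin m), (-1 : ℤ) ^ #S • (∑ j ∈ Sᶜ, y j) ^ m := by
  classical
  have hbij (r : Fin m → Fin m) : univ.image r = univ ↔ Function.Bijective r := by
    rw [← Finite.surjective_iff_bijective, ← coe_inj, coe_image, coe_univ, Set.image_univ,
      Set.range_eq_univ]
  have hpi (S : Finset (Fin m)) :
      Fintype.piFinset (fun _ : Fin m => Sᶜ) = univ.filter fun r => Disjoint S (univ.image r) := by
    ext r
    simp [Fintype.mem_piFinset, disjoint_right]
  calc symProd R A m y
      = ∑ r : Fin m → Fin m, if Function.Bijective r then (List.ofFn (y ∘ r)).prod else 0 := by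
        rw [symProd_apply, ← sum_filter, sum_subtype _ fun r => mem_filter_univ r]
        exact Fintype.sum_equiv (Equiv.bijectiveEquiv (α := Fin m) (β := Fin m)).symm _ _
          fun _ => rfl
    -- inclusion–exclusion over the complement of the image of `r`
    _ = ∑ r : Fin m → Fin m, ∑ S : Finset (Fin m),
          (if Disjoint S (univ.image r) then (-1 : ℤ) ^ #S else 0) • (List.ofFn (y ∘ r)).prod := by
        refine sum_congr rfl fun r _ => ?_
        rw [← sum_smul, sum_powerset_disjoint_neg_one_pow_card]
        simp only [hbij, ite_smul, one_smul, zero_smul]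
    _ = _ := by
        rw [sum_comm]
        refine sum_congr rfl fun S _ => ?_
        simp only [sum_pow_eq_sum_piFinset, hpi, smul_sum, sum_filter, ite_smul, zero_smul,
          smul_ite, smul_zero]

variable {K : Type} [Field K] {n : ℕ}

lemma count_word (α : Fin n → ℕ) (i : Fin n) : (word n α).count i = α i := by
  simp [word, List.count_flatMap, List.count_replicate, ← List.ofFn_eq_map, List.sum_ofFn]

lemma coe_word (α : Fin n → ℕ) :
    (word n α : Multiset (Fin n)) = Finsupp.toMultiset (Finsupp.equivFunOnFinite.symm α) := by
  ext i
  simp [count_word]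

lemma symz_eq_inv_smul_symProd (α : Fin n → ℕ) :
    symz K n α = ((word n α).length ! : K)⁻¹ •
      symProd K (FreeAlgebra K (Fin n)) _ (FreeAlgebra.ι K ∘ (word n α).get) := by
  simp [symz, symProd_apply, Function.comp_def]

def abelianize (R σ : Type*) [CommSemiring R] : FreeAlgebra R σ →ₐ[R] MvPolynomial σ R :=
  FreeAlgebra.lift R MvPolynomial.X

lemma abelianize_symz [CharZero K] (α : Fin n → ℕ) :
    abelianize K (Fin n) (symz K n α) =
      MvPolynomial.monomial (Finsupp.equivFunOnFinite.symm α) 1 := by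
  have hword : ∏ j, MvPolynomial.X ((word n α).get j) =
      MvPolynomial.monomial (R := K) (Finsupp.equivFunOnFinite.symm α) 1 := by
    have hmap := Multiset.map_map (MvPolynomial.X (R := K)) (word n α).get univ.val
    rw [Function.comp_def, Fin.univ_val_map, List.ofFn_get, coe_word] at hmap
    rw [← MvPolynomial.prod_X_pow_eq_monomial, prod_eq_multiset_prod, ← hmap,
      prod_multiset_map_count]
    simp
  rw [symz_eq_inv_smul_symProd, map_smul, map_symProd, ← Nat.cast_smul_eq_nsmul K, smul_smul,
    inv_mul_cancel₀ (Nat.cast_ne_zero.mpr (Nat.factorial_ne_zero _)), one_smul]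
  simpa [abelianize] using hword

variable (K n) in
def Phiₗ : MvPolynomial (Fin n) K →ₗ[K] FreeAlgebra K (Fin n) :=
  Finsupp.linearCombination K (fun d : Fin n →₀ ℕ => symz K n d) ∘ₗ
    (AddMonoidAlgebra.coeffLinearEquiv K).toLinearMap

lemma coe_Phiₗ : ⇑(Phiₗ K n) = Phi K n := rfl

lemma abelianize_Phi [CharZero K] (p : MvPolynomial (Fin n) K) :
    abelianize K (Fin n) (Phi K n p) = p := by
  simp only [Phi, map_sum, map_smul, abelianize_symz, Finsupp.equivFunOnFinite_symm_coe,
    MvPolynomial.smul_monomial, smul_eq_mul, mul_one]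
  exact MvPolynomial.support_sum_monomial_coeff p

lemma range_Phi : Set.range (Phi K n) = Submodule.span K (Set.range (symz K n)) := by
  rw [← coe_Phiₗ, ← LinearMap.coe_range, Phiₗ,
    LinearMap.range_comp_of_range_eq_top _ (LinearEquiv.range _),
    Finsupp.range_linearCombination, ← Finsupp.equivFunOnFinite.surjective.range_comp (symz K n)]
  rfl

lemma pow_mem_Reg {x : FreeAlgebra K (Fin n)}
    (hx : x ∈ Submodule.span K (Set.range (FreeAlgebra.ι K))) (m : ℕ) : x ^ m ∈ Reg K n := by
  obtain ⟨c, rfl⟩ := (Submodule.mem_span_range_iff_exists_fun K).mp hx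
  exact Submodule.subset_span ⟨m, c, rfl⟩

lemma symProd_mem_Reg {m : ℕ} {y : Fin m → FreeAlgebra K (Fin n)}
    (hy : ∀ j, y j ∈ Submodule.span K (Set.range (FreeAlgebra.ι K))) :
    symProd K _ m y ∈ Reg K n := by
  rw [symProd_eq_sum_neg_one_pow_smul_pow]
  exact Submodule.sum_mem _ fun S _ =>
    zsmul_mem (pow_mem_Reg (Submodule.sum_mem _ fun j _ => hy j) m) _

lemma symz_mem_Reg (α : Fin n → ℕ) : symz K n α ∈ Reg K n := by
  rw [symz_eq_inv_smul_symProd]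
  exact Submodule.smul_mem _ _ (symProd_mem_Reg fun j => Submodule.subset_span ⟨_, rfl⟩)

lemma symProd_ι_comp_mem_span_symz [CharZero K] {m : ℕ} (r : Fin m → Fin n) :
    symProd K _ m (FreeAlgebra.ι K ∘ r) ∈ Submodule.span K (Set.range (symz K n)) := by
  set α : Fin n → ℕ := ⇑(Multiset.toFinsupp (univ.val.map r))
  have hmultiset : univ.val.map (word n α).get = univ.val.map r := by
    rw [Fin.univ_val_map, List.ofFn_get, coe_word, Finsupp.equivFunOnFinite_symm_coe,
      Multiset.toFinsupp_toMultiset]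
  obtain ⟨e, he⟩ := exists_equiv_comp_eq_of_map_univ_eq hmultiset
  have hsymz : symProd K _ m (FreeAlgebra.ι K ∘ r) = ((word n α).length ! : K) • symz K n α := by
    rw [symz_eq_inv_smul_symProd, smul_inv_smul₀ (Nat.cast_ne_zero.mpr (Nat.factorial_ne_zero _)),
      ← he, ← symProd_comp_equiv _ e]
    rfl
  rw [hsymz]
  exact Submodule.smul_mem _ _ (Submodule.subset_span ⟨α, rfl⟩)

lemma pow_linear_form_mem_span_symz [CharZero K] (c : Fin n → K) (m : ℕ) :
    (∑ i, c i • FreeAlgebra.ι K i) ^ m ∈ Submodule.span K (Set.range (symz K n)) := by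
  have hexpand : m ! • (∑ i, c i • FreeAlgebra.ι K i) ^ m =
      ∑ r : Fin m → Fin n, (∏ k, c (r k)) • symProd K _ m (FreeAlgebra.ι K ∘ r) := by
    rw [← symProd_const (R := K), MultilinearMap.map_sum]
    simp only [MultilinearMap.map_smul_univ]
    rfl
  have hpow : (∑ i, c i • FreeAlgebra.ι K i) ^ m = (m ! : K)⁻¹ •
      ∑ r : Fin m → Fin n, (∏ k, c (r k)) • symProd K _ m (FreeAlgebra.ι K ∘ r) := by
    rw [← hexpand, ← Nat.cast_smul_eq_nsmul K,
      inv_smul_smul₀ (Nat.cast_ne_zero.mpr (Nat.factorial_ne_zero _))]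
  rw [hpow]
  exact Submodule.smul_mem _ _ (Submodule.sum_mem _ fun r _ =>
    Submodule.smul_mem _ _ (symProd_ι_comp_mem_span_symz r))

lemma span_symz_eq_Reg [CharZero K] : Submodule.span K (Set.range (symz K n)) = Reg K n := by
  refine le_antisymm (Submodule.span_le.mpr (Set.range_subset_iff.mpr symz_mem_Reg)) ?_
  refine Submodule.span_le.mpr ?_
  rintro _ ⟨m, c, rfl⟩
  exact pow_linear_form_mem_span_symz c m

theorem symmetrization_iso_onto_regular (K : Type) [Field K] [CharZero K] (n : ℕ) :
    (∀ p q : MvPolynomial (Fin n) K, Phi K n (p + q) = Phi K n p + Phi K n q) ∧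
    (∀ (c : K) (p : MvPolynomial (Fin n) K), Phi K n (c • p) = c • Phi K n p) ∧
    Function.Injective (Phi K n) ∧
    Set.range (Phi K n) = (Reg K n : Set (FreeAlgebra K (Fin n))) := by
  refine ⟨map_add (Phiₗ K n), map_smul (Phiₗ K n), ?_, ?_⟩
  · exact Function.LeftInverse.injective abelianize_Phi
  · rw [range_Phi, span_symz_eq_Reg]

end
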